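/- Fix constants c₁ > 0 and c₂ > 0 (independent of b) and q ∈ (0, 1]. Minimizing F(η, α) = c₁/(η K) + c₂·α^(1/2)·b^(−q) + c₃·η/α over η > 0 and α > 0 with K = T/b (fixed token budget T), yields a minimum value proportional to T^(−1/4)·b^(1/4 − q/2). In particular, the exponent of b in the optimized bound is zero if and only if q = 1/2. -/

import Mathlib

private lemma amgm17 (x y : ℝ) (hx : 0 < x) (hy : 0 < y) :
    2 * (x * y) ^ ((1 : ℝ) / 2) ≤ x + y := by
  rw [← Real.sqrt_eq_rpow]
  nlinarith [sq_nonneg (Real.sqrt x - Real.sqrt y), Real.sq_sqrt hx.le, Real.sq_sqrt hy.le,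
    Real.sqrt_mul hx.le y, Real.sqrt_nonneg x, Real.sqrt_nonneg y]

private lemma sq_eq17 (a b : ℝ) (ha : 0 ≤ a) (hb : 0 ≤ b) (h : a ^ 2 = b ^ 2) : a = b := by
  rw [← Real.sqrt_sq ha, ← Real.sqrt_sq hb, h]

private lemma rpow_half_sq17 (x : ℝ) (hx : 0 ≤ x) : (x ^ ((1 : ℝ) / 2)) ^ 2 = x := by
  rw [← Real.rpow_natCast (x ^ ((1 : ℝ) / 2)) 2, ← Real.rpow_mul hx]
  norm_num

/-- Generalized noise scaling `b^(−q)`: with `K = T/b`, minimizing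
`F(η,α) = c₁/(ηK) + c₂·α^(1/2)·b^(−q) + c₃·η/α` over `η, α > 0` yields the minimum value
`2√2·c₂^(1/2)·(c₁c₃)^(1/4)·T^(−1/4)·b^(1/4 − q/2)`; the exponent of `b` is zero iff
`q = 1/2`. -/
theorem stmt_17 (c₁ c₂ c₃ q b T : ℝ) (h₁ : 0 < c₁) (h₂ : 0 < c₂) (h₃ : 0 < c₃)
    (hq0 : 0 < q) (hq1 : q ≤ 1) (hb : 0 < b) (hT : 0 < T) :
    let K := T / b
    let M := 2 * Real.sqrt 2 * c₂ ^ ((1 : ℝ) / 2) * (c₁ * c₃) ^ ((1 : ℝ) / 4) *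
      T ^ (-(1 : ℝ) / 4) * b ^ ((1 : ℝ) / 4 - q / 2)
    (∀ η α : ℝ, 0 < η → 0 < α →
      M ≤ c₁ / (η * K) + c₂ * α ^ ((1 : ℝ) / 2) * b ^ (-q) + c₃ * η / α) ∧
    (∃ η α : ℝ, 0 < η ∧ 0 < α ∧
      c₁ / (η * K) + c₂ * α ^ ((1 : ℝ) / 2) * b ^ (-q) + c₃ * η / α = M) ∧
    ((1 : ℝ) / 4 - q / 2 = 0 ↔ q = 1 / 2) := by
  intro K M
  have hK : K = T / b := rfl
  have hM : M = 2 * Real.sqrt 2 * c₂ ^ ((1 : ℝ) / 2) * (c₁ * c₃) ^ ((1 : ℝ) / 4) *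
      T ^ (-(1 : ℝ) / 4) * b ^ ((1 : ℝ) / 4 - q / 2) := rfl
  set A : ℝ := c₁ * b / T with hA
  set B : ℝ := c₂ * b ^ (-q) with hB
  have hApos : 0 < A := by positivity
  have hBpos : 0 < B := by positivity
  set s : ℝ := (A * c₃) ^ ((1 : ℝ) / 2) with hs
  have hspos : 0 < s := by positivity
  have hs2 : s ^ 2 = A * c₃ := rpow_half_sq17 _ (by positivity)
  set X : ℝ := 2 * s * B with hX
  have hXpos : 0 < X := by positivity
  -- the key closed form : M = 2 * X^(1/2)
  have hMX : M = 2 * X ^ ((1 : ℝ) / 2) := by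
    have e1 : X ^ ((1 : ℝ) / 2) = 2 ^ ((1 : ℝ) / 2) * s ^ ((1 : ℝ) / 2) * B ^ ((1 : ℝ) / 2) := by
      rw [hX, Real.mul_rpow (by positivity) hBpos.le,
        Real.mul_rpow (by norm_num) hspos.le]
    have e2 : s ^ ((1 : ℝ) / 2) = (c₁ * c₃) ^ ((1 : ℝ) / 4) * b ^ ((1 : ℝ) / 4) *
        T ^ (-(1 : ℝ) / 4) := by
      have hAc : A * c₃ = (c₁ * c₃) * b * T⁻¹ := by rw [hA]; ring
      rw [hs, ← Real.rpow_mul (by positivity), hAc,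
        Real.mul_rpow (by positivity) (by positivity),
        Real.mul_rpow (by positivity) hb.le, ← Real.rpow_neg_one T,
        ← Real.rpow_mul hT.le]
      norm_num
    have e3 : B ^ ((1 : ℝ) / 2) = c₂ ^ ((1 : ℝ) / 2) * b ^ (-(q / 2)) := by
      rw [hB, Real.mul_rpow h₂.le (by positivity), ← Real.rpow_mul hb.le]
      congr 1
      ring
    have e4 : b ^ ((1 : ℝ) / 4) * b ^ (-(q / 2)) = b ^ ((1 : ℝ) / 4 - q / 2) := by
      rw [← Real.rpow_add hb]; ring_nf
    have e5 : (2 : ℝ) ^ ((1 : ℝ) / 2) = Real.sqrt 2 := (Real.sqrt_eq_rpow 2).symm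
    rw [hM, e1, e2, e3, e5, ← e4]; ring
  clear_value A B s X
  refine ⟨?_, ?_, ?_⟩
  · -- lower bound
    intro η α hη hα
    have t1 : 0 < c₁ / (η * K) := by rw [hK]; positivity
    have t3 : 0 < c₃ * η / α := by positivity
    have hprod : (c₁ / (η * K)) * (c₃ * η / α) = A * c₃ / α := by
      rw [hK, hA]; field_simp
    have hinner : (2 * (A * c₃ / α) ^ ((1 : ℝ) / 2)) * (c₂ * α ^ ((1 : ℝ) / 2) * b ^ (-q)) =
        X := by
      have h1 : (2 * (A * c₃ / α) ^ ((1 : ℝ) / 2)) * (c₂ * α ^ ((1 : ℝ) / 2) * b ^ (-q)) =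
          2 * ((A * c₃ / α) ^ ((1 : ℝ) / 2) * α ^ ((1 : ℝ) / 2)) * (c₂ * b ^ (-q)) := by ring
      rw [h1, ← Real.mul_rpow (by positivity) hα.le, div_mul_cancel₀ _ hα.ne', hX, hB, hs]
    calc M = 2 * X ^ ((1 : ℝ) / 2) := hMX
      _ = 2 * ((2 * (A * c₃ / α) ^ ((1 : ℝ) / 2)) *
            (c₂ * α ^ ((1 : ℝ) / 2) * b ^ (-q))) ^ ((1 : ℝ) / 2) := by rw [hinner]
      _ ≤ 2 * (A * c₃ / α) ^ ((1 : ℝ) / 2) + c₂ * α ^ ((1 : ℝ) / 2) * b ^ (-q) :=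
          amgm17 _ _ (by positivity) (by positivity)
      _ = 2 * ((c₁ / (η * K)) * (c₃ * η / α)) ^ ((1 : ℝ) / 2) +
            c₂ * α ^ ((1 : ℝ) / 2) * b ^ (-q) := by rw [hprod]
      _ ≤ (c₁ / (η * K) + c₃ * η / α) + c₂ * α ^ ((1 : ℝ) / 2) * b ^ (-q) :=
          add_le_add_left (amgm17 _ _ t1 t3) _
      _ = c₁ / (η * K) + c₂ * α ^ ((1 : ℝ) / 2) * b ^ (-q) + c₃ * η / α := by ring
  · -- existence of minimizers
    set v : ℝ := X ^ ((1 : ℝ) / 2) with hv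
    have hvpos : 0 < v := by positivity
    have hv2 : v ^ 2 = X := rpow_half_sq17 _ hXpos.le
    set α₀ : ℝ := X / B ^ 2 with hα₀
    have hα₀pos : 0 < α₀ := by positivity
    set u : ℝ := α₀ ^ ((1 : ℝ) / 2) with hu
    have hupos : 0 < u := by positivity
    have hu2 : u ^ 2 = α₀ := rpow_half_sq17 _ hα₀pos.le
    set w : ℝ := (A * α₀ / c₃) ^ ((1 : ℝ) / 2) with hw
    have hwpos : 0 < w := by positivity
    have hw2 : w ^ 2 = A * α₀ / c₃ := rpow_half_sq17 _ (by positivity)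
    clear_value v α₀ u w
    refine ⟨w, α₀, hwpos, hα₀pos, ?_⟩
    have hXα' : X * α₀ = 4 * (A * c₃) := by
      rw [hα₀, hX, ← hs2]
      field_simp
      ring
    have hw2' : w ^ 2 * c₃ = A * α₀ := by
      rw [hw2]; field_simp
    have eu : u = v / B := by
      apply sq_eq17 _ _ hupos.le (by positivity)
      rw [hu2, div_pow, hv2, hα₀]
    have ew : 2 * A / w = v := by
      have key : (2 * A) ^ 2 * c₃ = X * (A * α₀) := by linear_combination (-A) * hXα'
      apply sq_eq17 _ _ (by positivity) hvpos.le
      rw [div_pow, hv2, hw2, div_eq_iff (ne_of_gt (by positivity : (0:ℝ) < A * α₀ / c₃))]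
      field_simp
      linear_combination -hXα'
    have ew' : A / w + A / w = v := by rw [← ew]; ring
    have e1 : c₁ / (w * K) = A / w := by
      rw [hK, hA]; field_simp
    have e3 : c₃ * w / α₀ = A / w := by
      rw [div_eq_div_iff hα₀pos.ne' hwpos.ne']
      linear_combination hw2'
    have e2 : c₂ * α₀ ^ ((1 : ℝ) / 2) * b ^ (-q) = B * u := by
      rw [hB, hu]; ring
    have hBv : B * (v / B) = v := by field_simp
    rw [e1, e2, e3, eu, hMX, hBv]
    linarith [ew']
  · constructor
    · intro h; linarith
    · intro h; rw [h]; norm_num
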